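/- Let F be a real 2d×2d symplectic matrix with block decomposition F = [[A, B], [C, D]] (each block d×d), and let Θ be a complex symmetric d×d matrix with positive definite real part. Then the complex matrix Y(F;Θ) := Dᵀ − i Bᵀ Θ is invertible. -/

import Mathlib

open Matrix

/-- The standard symplectic matrix `J = [[0, I], [-I, 0]]`. -/
noncomputable def symplJ (d : ℕ) : Matrix (Fin d ⊕ Fin d) (Fin d ⊕ Fin d) ℝ :=
  Matrix.fromBlocks 0 1 (-1) 0

/-- The real part of a complex matrix. -/
def matRe {d : ℕ} (Θ : Matrix (Fin d) (Fin d) ℂ) : Matrix (Fin d) (Fin d) ℝ :=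
  Matrix.of fun i j => (Θ i j).re

/-- `Y(F;Θ) = Dᵀ − i Bᵀ Θ`. -/
noncomputable def calY {d : ℕ} (B D : Matrix (Fin d) (Fin d) ℝ)
    (Θ : Matrix (Fin d) (Fin d) ℂ) : Matrix (Fin d) (Fin d) ℂ :=
  (D.map Complex.ofReal)ᵀ - Complex.I • ((B.map Complex.ofReal)ᵀ * Θ)

/-
Since `Θ` is symmetric, `Yᵀ = D − iΘB`. If `Yᵀu = 0`, put `x = Bu`, so that `Du = iΘx`.
The symplectic relation `BᵀD = DᵀB` makes `x̄ᵀ(Du) = ūᵀ(BᵀD)u` real, while `x̄ᵀ(Du) = i x̄ᵀΘx`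
has imaginary part `Re(x̄ᵀΘx) = x̄ᵀ(Re Θ)x`, positive unless `x = 0`. Hence `Bu = Du = 0`, and the
symplectic relation `AᵀD − CᵀB = 1` gives `u = 0`.
-/

open Complex

section Symplectic

variable {d : ℕ} {A B C D : Matrix (Fin d) (Fin d) ℝ}

theorem fromBlocks_transpose_mul_symplJ_mul (A B C D : Matrix (Fin d) (Fin d) ℝ) :
    (fromBlocks A B C D)ᵀ * symplJ d * fromBlocks A B C D =
      fromBlocks (Aᵀ * C - Cᵀ * A) (Aᵀ * D - Cᵀ * B) (Bᵀ * C - Dᵀ * A) (Bᵀ * D - Dᵀ * B) := by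
  simp [symplJ, fromBlocks_transpose, fromBlocks_multiply, sub_eq_add_neg, add_comm]

theorem isSymm_transpose_mul_of_symplectic
    (h : (fromBlocks A B C D)ᵀ * symplJ d * fromBlocks A B C D = symplJ d) :
    (Bᵀ * D).IsSymm := by
  have h₂₂ := congrArg toBlocks₂₂ h
  rw [fromBlocks_transpose_mul_symplJ_mul] at h₂₂
  simp only [symplJ, toBlocks_fromBlocks₂₂, sub_eq_zero] at h₂₂
  rw [IsSymm, transpose_mul, transpose_transpose, h₂₂]

theorem transpose_mul_sub_transpose_mul_eq_one_of_symplectic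
    (h : (fromBlocks A B C D)ᵀ * symplJ d * fromBlocks A B C D = symplJ d) :
    Aᵀ * D - Cᵀ * B = 1 := by
  have := congrArg toBlocks₁₂ h
  rw [fromBlocks_transpose_mul_symplJ_mul] at this
  simpa [symplJ] using this

end Symplectic

section Complexification

variable {n : Type*} [Fintype n]

theorem re_star_dotProduct_map_ofReal_mulVec (R : Matrix n n ℝ) (x : n → ℂ) :
    (star x ⬝ᵥ R.map ofReal *ᵥ x).re =
      (fun i => (x i).re) ⬝ᵥ R *ᵥ (fun i => (x i).re) +
        (fun i => (x i).im) ⬝ᵥ R *ᵥ (fun i => (x i).im) := by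
  simp only [dotProduct, mulVec, Finset.mul_sum, re_sum, ← Finset.sum_add_distrib]
  refine Finset.sum_congr rfl fun i _ => Finset.sum_congr rfl fun j _ => ?_
  simp [mul_re, mul_im]

theorem Matrix.PosDef.re_star_dotProduct_map_ofReal_mulVec_pos {R : Matrix n n ℝ}
    (hR : R.PosDef) {x : n → ℂ} (hx : x ≠ 0) : 0 < (star x ⬝ᵥ R.map ofReal *ᵥ x).re := by
  rw [re_star_dotProduct_map_ofReal_mulVec]
  have hre := hR.posSemidef.dotProduct_mulVec_nonneg fun i => (x i).re
  have him := hR.posSemidef.dotProduct_mulVec_nonneg fun i => (x i).im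
  simp only [star_trivial] at hre him
  by_cases h : (fun i => (x i).re) = 0
  · have h' : (fun i => (x i).im) ≠ 0 := fun h' =>
      hx <| funext fun i => Complex.ext (congrFun h i) (congrFun h' i)
    simpa using add_pos_of_nonneg_of_pos hre (hR.dotProduct_mulVec_pos h')
  · simpa using add_pos_of_pos_of_nonneg (hR.dotProduct_mulVec_pos h) him

theorem im_star_dotProduct_map_ofReal_mulVec_self {S : Matrix n n ℝ} (hS : S.IsSymm)
    (x : n → ℂ) : (star x ⬝ᵥ S.map ofReal *ᵥ x).im = 0 :=
  (isHermitian_iff_isSymm.mpr hS |>.map _ fun r => (conj_ofReal r).symm)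
    |>.im_star_dotProduct_mulVec_self x

theorem im_star_mulVec_dotProduct_mulVec_eq_zero {B D : Matrix n n ℝ} (h : (Bᵀ * D).IsSymm)
    (u : n → ℂ) : (star (B.map ofReal *ᵥ u) ⬝ᵥ D.map ofReal *ᵥ u).im = 0 := by
  have hmap : (B.map ofReal)ᴴ * D.map ofReal = (Bᵀ * D).map ofReal := by
    rw [← conjTranspose_map _ fun r => (conj_ofReal r).symm,
      conjTranspose_eq_transpose_of_trivial]
    exact (Matrix.map_mul (f := ofRealHom)).symm
  rw [star_mulVec, ← dotProduct_mulVec, mulVec_mulVec, hmap]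
  exact im_star_dotProduct_map_ofReal_mulVec_self h u

end Complexification

section SymmetricPositiveRealPart

variable {d : ℕ} {Θ : Matrix (Fin d) (Fin d) ℂ}

def matIm (Θ : Matrix (Fin d) (Fin d) ℂ) : Matrix (Fin d) (Fin d) ℝ :=
  Matrix.of fun i j => (Θ i j).im

theorem map_matRe_add_I_smul_map_matIm (Θ : Matrix (Fin d) (Fin d) ℂ) :
    (matRe Θ).map ofReal + I • (matIm Θ).map ofReal = Θ := by
  ext i j
  simp [matRe, matIm, mul_comm I, re_add_im]

theorem matIm_isSymm (hΘ : Θᵀ = Θ) : (matIm Θ).IsSymm := by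
  ext i j
  simp [matIm, ← congrFun₂ hΘ i j]

theorem re_star_dotProduct_mulVec_of_transpose_eq (hΘ : Θᵀ = Θ) (x : Fin d → ℂ) :
    (star x ⬝ᵥ Θ *ᵥ x).re = (star x ⬝ᵥ (matRe Θ).map ofReal *ᵥ x).re := by
  conv_lhs => rw [← map_matRe_add_I_smul_map_matIm Θ]
  rw [add_mulVec, smul_mulVec, dotProduct_add, dotProduct_smul, add_re, smul_eq_mul, mul_re,
    I_re, I_im, im_star_dotProduct_map_ofReal_mulVec_self (matIm_isSymm hΘ)]
  ring

theorem re_star_dotProduct_mulVec_pos (hΘ : Θᵀ = Θ) (hΘre : (matRe Θ).PosDef) {x : Fin d → ℂ}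
    (hx : x ≠ 0) : 0 < (star x ⬝ᵥ Θ *ᵥ x).re := by
  rw [re_star_dotProduct_mulVec_of_transpose_eq hΘ]
  exact hΘre.re_star_dotProduct_map_ofReal_mulVec_pos hx

end SymmetricPositiveRealPart

section Kernel

variable {d : ℕ} {A B C D : Matrix (Fin d) (Fin d) ℝ} {Θ : Matrix (Fin d) (Fin d) ℂ}

theorem calY_transpose (hΘ : Θᵀ = Θ) :
    (calY B D Θ)ᵀ = D.map ofReal - I • (Θ * B.map ofReal) := by
  rw [calY, transpose_sub, transpose_smul, transpose_mul, transpose_transpose, transpose_transpose,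
    hΘ]

theorem eq_zero_of_calY_transpose_mulVec_eq_zero
    (hsymp : (fromBlocks A B C D)ᵀ * symplJ d * fromBlocks A B C D = symplJ d)
    (hΘ : Θᵀ = Θ) (hΘre : (matRe Θ).PosDef) {u : Fin d → ℂ} (hu : (calY B D Θ)ᵀ *ᵥ u = 0) :
    u = 0 := by
  set x := B.map ofReal *ᵥ u
  have hDu : D.map ofReal *ᵥ u = I • (Θ *ᵥ x) := by
    rwa [calY_transpose hΘ, sub_mulVec, smul_mulVec, ← mulVec_mulVec, sub_eq_zero] at hu
  have hx : x = 0 := by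
    by_contra hx
    have hre := re_star_dotProduct_mulVec_pos hΘ hΘre hx
    have him :=
      im_star_mulVec_dotProduct_mulVec_eq_zero (isSymm_transpose_mul_of_symplectic hsymp) u
    rw [hDu, dotProduct_smul, smul_eq_mul, mul_im, I_re, I_im] at him
    linarith
  have hD : D.map ofReal *ᵥ u = 0 := by rw [hDu, hx, mulVec_zero, smul_zero]
  have hid : Aᵀ.map ofReal * D.map ofReal - Cᵀ.map ofReal * B.map ofReal = 1 := by
    have h := congrArg ofRealHom.mapMatrix
      (transpose_mul_sub_transpose_mul_eq_one_of_symplectic hsymp)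
    rwa [map_sub, map_mul, map_mul, map_one] at h
  calc u = (Aᵀ.map ofReal * D.map ofReal - Cᵀ.map ofReal * B.map ofReal) *ᵥ u := by
        rw [hid, one_mulVec]
    _ = Aᵀ.map ofReal *ᵥ (D.map ofReal *ᵥ u) - Cᵀ.map ofReal *ᵥ x := by
        rw [sub_mulVec, mulVec_mulVec, mulVec_mulVec]
    _ = 0 := by rw [hD, hx, mulVec_zero, mulVec_zero, sub_zero]

end Kernel

/-- If `F = [[A,B],[C,D]]` is real symplectic and `Θ` is complex
symmetric with positive definite real part, then `Y(F;Θ) = Dᵀ − i Bᵀ Θ` is invertible. -/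
theorem calY_isUnit {d : ℕ} (A B C D : Matrix (Fin d) (Fin d) ℝ)
    (Θ : Matrix (Fin d) (Fin d) ℂ)
    (hsymp : (Matrix.fromBlocks A B C D)ᵀ * symplJ d * Matrix.fromBlocks A B C D = symplJ d)
    (hΘsymm : Θᵀ = Θ)
    (hΘre : (matRe Θ).PosDef) :
    IsUnit (calY B D Θ) := by
  rw [← isUnit_transpose, isUnit_iff_isUnit_det, isUnit_iff_ne_zero, Ne,
    ← exists_mulVec_eq_zero_iff]
  rintro ⟨u, hu0, hu⟩
  exact hu0 (eq_zero_of_calY_transpose_mulVec_eq_zero hsymp hΘsymm hΘre hu)
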